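/- arXiv:2502.03902 — 2 statements merged into one kernel-verified Lean document; each statement's English description precedes it below -/
import Mathlib

section
/- For the flocking system, along any solution of the closed-loop system with the stabilizing control u*_i = m_i (ẋ₄ - ż₄)⁻¹ [g(ẋ₄ - ẋ_i) - (ẋ₄ż_i - ẋ_iż₄)] (i = 1,2,3), the functions φᵇ(t) = ẋ₄(t)żᵇ(t) - ẋᵇ(t)ż₄(t) satisfy φᵇ(t) = φᵇ(0) e^{-t}, provided ẋ₄(t) ≠ ż₄(t) along the trajectory. -/
/-!
Along the closed loop, `ẋ₄` is constant and `ż₄, żᵇ` share the drift `-g`, so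
`φ̇ᵇ = (ẋ₄ - ż₄) aᵇ - g (ẋ₄ - ẋᵇ)` with `aᵇ = uᵇ / mᵇ`. The control law is chosen precisely so
that this equals `-φᵇ`, and the solution of `φ̇ = -φ` is `φ(0) e^{-t}`.
-/

open Real

theorem eq_mul_exp_of_hasDerivAt_mul_self {f : ℝ → ℝ} {k : ℝ}
    (hf : ∀ t, HasDerivAt f (k * f t) t) (t : ℝ) :
    f t = f 0 * exp (k * t) := by
  have hconst : ∀ s, HasDerivAt (fun s => f s * exp (-(k * s))) 0 s := fun s => by
    have he : HasDerivAt (fun s => exp (-(k * s))) (exp (-(k * s)) * -k) s := by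
      simpa using ((hasDerivAt_id s).const_mul k).neg.exp
    exact ((hf s).mul he).congr_deriv (by ring)
  have h := is_const_of_deriv_eq_zero (fun s => (hconst s).differentiableAt)
    (fun s => (hconst s).deriv) t 0
  simp only [mul_zero, neg_zero, exp_zero, mul_one] at h
  rw [← h, mul_assoc, ← exp_add, neg_add_cancel, exp_zero, mul_one]

theorem hasDerivAt_mul_sub_mul_of_common_drift {vx₄ vz₄ vx vz : ℝ → ℝ} {a g t : ℝ}
    (hx₄ : HasDerivAt vx₄ 0 t) (hz₄ : HasDerivAt vz₄ (-g) t)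
    (hx : HasDerivAt vx a t) (hz : HasDerivAt vz (a - g) t) :
    HasDerivAt (fun s => vx₄ s * vz s - vx s * vz₄ s)
      ((vx₄ t - vz₄ t) * a - g * (vx₄ t - vx t)) t :=
  ((hx₄.mul hz).sub (hx.mul hz₄)).congr_deriv (by ring)

theorem stmt8_general (mass : Fin 4 → ℝ) (hm : ∀ i, 0 < mass i) (g : ℝ)
    (vx vz : Fin 4 → ℝ → ℝ)
    (u : Fin 3 → ℝ → ℝ)
    (hu : ∀ (b : Fin 3) (t : ℝ),
      u b t = mass b.castSucc * (vx 3 t - vz 3 t)⁻¹ *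
        (g * (vx 3 t - vx b.castSucc t)
          - (vx 3 t * vz b.castSucc t - vx b.castSucc t * vz 3 t)))
    (hax : ∀ (b : Fin 3) (t : ℝ),
      HasDerivAt (vx b.castSucc) (u b t / mass b.castSucc) t)
    (haz : ∀ (b : Fin 3) (t : ℝ),
      HasDerivAt (vz b.castSucc) (u b t / mass b.castSucc - g) t)
    (hax4 : ∀ t, HasDerivAt (vx 3) 0 t)
    (haz4 : ∀ t, HasDerivAt (vz 3) (-g) t)
    (hne : ∀ t, vx 3 t ≠ vz 3 t) :
    ∀ (t : ℝ) (b : Fin 3),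
      vx 3 t * vz b.castSucc t - vx b.castSucc t * vz 3 t
        = (vx 3 0 * vz b.castSucc 0 - vx b.castSucc 0 * vz 3 0) * Real.exp (-t) := by
  intro t b
  have hφ : ∀ s, HasDerivAt (fun s => vx 3 s * vz b.castSucc s - vx b.castSucc s * vz 3 s)
      (-1 * (vx 3 s * vz b.castSucc s - vx b.castSucc s * vz 3 s)) s := fun s => by
    convert hasDerivAt_mul_sub_mul_of_common_drift (hax4 s) (haz4 s) (hax b s) (haz b s) using 1
    have hgap : vx 3 s - vz 3 s ≠ 0 := sub_ne_zero.mpr (hne s)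
    rw [hu b s, mul_assoc, mul_div_cancel_left₀ _ (hm b.castSucc).ne', mul_inv_cancel_left₀ hgap]
    ring
  simpa only [neg_one_mul] using eq_mul_exp_of_hasDerivAt_mul_self hφ t

/-- Flocking example: with the stabilizing control law
`u*_i = m_i (ẋ₄ - ż₄)⁻¹ [g(ẋ₄ - ẋ_i) - (ẋ₄ż_i - ẋ_iż₄)]` (unit gains),
the constraint functions `φᵇ = ẋ₄żᵇ - ẋᵇż₄` decay as `φᵇ(t) = φᵇ(0) e^{-t}`
along closed-loop trajectories, provided `ẋ₄(t) ≠ ż₄(t)`. -/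
theorem stmt8 (mass : Fin 4 → ℝ) (hm : ∀ i, 0 < mass i) (g : ℝ)
    (x z vx vz : Fin 4 → ℝ → ℝ)
    (hx : ∀ i t, HasDerivAt (x i) (vx i t) t)
    (hz : ∀ i t, HasDerivAt (z i) (vz i t) t)
    (u : Fin 3 → ℝ → ℝ)
    (hu : ∀ (b : Fin 3) (t : ℝ),
      u b t = mass b.castSucc * (vx 3 t - vz 3 t)⁻¹ *
        (g * (vx 3 t - vx b.castSucc t)
          - (vx 3 t * vz b.castSucc t - vx b.castSucc t * vz 3 t)))
    (hax : ∀ (b : Fin 3) (t : ℝ),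
      HasDerivAt (vx b.castSucc) (u b t / mass b.castSucc) t)
    (haz : ∀ (b : Fin 3) (t : ℝ),
      HasDerivAt (vz b.castSucc) (u b t / mass b.castSucc - g) t)
    (hax4 : ∀ t, HasDerivAt (vx 3) 0 t)
    (haz4 : ∀ t, HasDerivAt (vz 3) (-g) t)
    (hne : ∀ t, vx 3 t ≠ vz 3 t) :
    ∀ (t : ℝ) (b : Fin 3),
      vx 3 t * vz b.castSucc t - vx b.castSucc t * vz 3 t
        = (vx 3 0 * vz b.castSucc 0 - vx b.castSucc 0 * vz 3 0) * Real.exp (-t) :=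
  stmt8_general mass hm g vx vz u hu hax haz hax4 haz4 hne
end

section
/- For the USV system on Q = ℝ² × S¹ with controlled equations mẍ = u sinθ + W¹, mÿ = -u cosθ + W², Iθ̈ = u, where W¹ = m·d(sin²θ C¹ - sinθcosθ C²)(q̇) and W² = m·d(-sinθcosθ C¹ + cos²θ C²)(q̇), the control law û = -m θ̇ (cosθ ẋ + sinθ ẏ) renders the affine constraint φ = sinθ ẋ - cosθ ẏ + cosθ C²(x,y) - sinθ C¹(x,y) = 0 invariant: the closed-loop dynamical vector field Γ satisfies Γ(φ) = 0 identically. -/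
/-!
Write `n = (sin θ, -cos θ)` for the normal of the constraint and `τ = (cos θ, sin θ)`, so that
`n' = θ̇ τ`, and `ψ = ⟨n, C⟩`, so that `φ = ⟨n, v⟩ - ψ`. The drift is `W = m (n ψ)'`, and since
`|n| = 1` forces `⟨n, n'⟩ = 0`, its normal component is `⟨n, W⟩ = m ψ'`. The control `û = -m θ̇ ⟨τ, v⟩`
cancels the rotation term `θ̇ ⟨τ, v⟩` of `⟨n, v⟩'`, leaving `⟨n, v⟩' = ψ'`, i.e. `φ' = 0`.
-/

open Real

variable {θ f g ψ : ℝ → ℝ} {ω f' g' ψ' t : ℝ}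

theorem hasDerivAt_sin_mul_sub_cos_mul (hθ : HasDerivAt θ ω t) (hf : HasDerivAt f f' t)
    (hg : HasDerivAt g g' t) :
    HasDerivAt (fun s => sin (θ s) * f s - cos (θ s) * g s)
      (ω * (cos (θ t) * f t + sin (θ t) * g t) + (sin (θ t) * f' - cos (θ t) * g')) t :=
  ((hθ.sin.fun_mul hf).fun_sub (hθ.cos.fun_mul hg)).congr_deriv (by ring)

theorem sin_mul_deriv_sin_mul_sub_cos_mul_deriv_neg_cos_mul (hθ : HasDerivAt θ ω t)
    (hψ : HasDerivAt ψ ψ' t) :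
    sin (θ t) * deriv (fun s => sin (θ s) * ψ s) t
      - cos (θ t) * deriv (fun s => -(cos (θ s) * ψ s)) t = ψ' := by
  rw [(hθ.sin.fun_mul hψ).deriv, (hθ.cos.fun_mul hψ).fun_neg.deriv]
  linear_combination ψ' * sin_sq_add_cos_sq (θ t)

theorem sin_mul_deriv_drift_sub_cos_mul_deriv_drift {A B : ℝ → ℝ}
    (hθ : DifferentiableAt ℝ θ t) (hA : DifferentiableAt ℝ A t) (hB : DifferentiableAt ℝ B t) :
    sin (θ t) * deriv (fun s => sin (θ s) ^ 2 * A s - sin (θ s) * cos (θ s) * B s) t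
      - cos (θ t) * deriv (fun s => -(sin (θ s) * cos (θ s)) * A s + cos (θ s) ^ 2 * B s) t
      = deriv (fun s => sin (θ s) * A s - cos (θ s) * B s) t := by
  have hψ := (hθ.sin.fun_mul hA).fun_sub (hθ.cos.fun_mul hB)
  have h1 : (fun s => sin (θ s) ^ 2 * A s - sin (θ s) * cos (θ s) * B s)
      = fun s => sin (θ s) * (sin (θ s) * A s - cos (θ s) * B s) := by
    ext s; ring
  have h2 : (fun s => -(sin (θ s) * cos (θ s)) * A s + cos (θ s) ^ 2 * B s)
      = fun s => -(cos (θ s) * (sin (θ s) * A s - cos (θ s) * B s)) := by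
    ext s; ring
  rw [h1, h2]
  exact sin_mul_deriv_sin_mul_sub_cos_mul_deriv_neg_cos_mul hθ.hasDerivAt hψ.hasDerivAt

theorem stmt9_general (m : ℝ) (hm : 0 < m)
    (C1 C2 : ℝ × ℝ → ℝ) (hC1 : Differentiable ℝ C1) (hC2 : Differentiable ℝ C2)
    (x y θ vx vy vθ : ℝ → ℝ)
    (hx : ∀ t, HasDerivAt x (vx t) t)
    (hy : ∀ t, HasDerivAt y (vy t) t)
    (hθ : ∀ t, HasDerivAt θ (vθ t) t)
    (u W1 W2 : ℝ → ℝ)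
    (hu : ∀ t, u t = -m * vθ t * (Real.cos (θ t) * vx t + Real.sin (θ t) * vy t))
    (hW1 : ∀ t, W1 t = m * deriv (fun s =>
      Real.sin (θ s) ^ 2 * C1 (x s, y s)
        - Real.sin (θ s) * Real.cos (θ s) * C2 (x s, y s)) t)
    (hW2 : ∀ t, W2 t = m * deriv (fun s =>
      -(Real.sin (θ s) * Real.cos (θ s)) * C1 (x s, y s)
        + Real.cos (θ s) ^ 2 * C2 (x s, y s)) t)
    (hax : ∀ t, HasDerivAt vx ((u t * Real.sin (θ t) + W1 t) / m) t)
    (hay : ∀ t, HasDerivAt vy ((-(u t * Real.cos (θ t)) + W2 t) / m) t) :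
    ∀ t, HasDerivAt (fun s =>
      Real.sin (θ s) * vx s - Real.cos (θ s) * vy s
        + Real.cos (θ s) * C2 (x s, y s) - Real.sin (θ s) * C1 (x s, y s)) 0 t := by
  intro t
  have hγ := (hx t).differentiableAt.prodMk (hy t).differentiableAt
  have hA : DifferentiableAt ℝ (fun s => C1 (x s, y s)) t := (hC1 _).comp t hγ
  have hB : DifferentiableAt ℝ (fun s => C2 (x s, y s)) t := (hC2 _).comp t hγ
  set ψ := fun s => sin (θ s) * C1 (x s, y s) - cos (θ s) * C2 (x s, y s)
  have hW : sin (θ t) * W1 t - cos (θ t) * W2 t = m * deriv ψ t := by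
    rw [hW1, hW2, ← sin_mul_deriv_drift_sub_cos_mul_deriv_drift (hθ t).differentiableAt hA hB]
    ring
  have hnv : HasDerivAt (fun s => sin (θ s) * vx s - cos (θ s) * vy s) (deriv ψ t) t := by
    convert hasDerivAt_sin_mul_sub_cos_mul (hθ t) (hax t) (hay t) using 1
    rw [hu]
    field_simp
    linear_combination -hW + m * vθ t * (cos (θ t) * vx t + sin (θ t) * vy t)
      * sin_sq_add_cos_sq (θ t)
  have hψ : HasDerivAt ψ (deriv ψ t) t :=
    (((hθ t).differentiableAt.sin.fun_mul hA).fun_sub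
      ((hθ t).differentiableAt.cos.fun_mul hB)).hasDerivAt
  have hφ : (fun s => sin (θ s) * vx s - cos (θ s) * vy s
      + cos (θ s) * C2 (x s, y s) - sin (θ s) * C1 (x s, y s))
      = fun s => sin (θ s) * vx s - cos (θ s) * vy s - ψ s := by
    ext s; simp only [ψ]; ring
  rw [hφ, ← sub_self (deriv ψ t)]
  exact hnv.fun_sub hψ

/-- USV example: with the control law `û = -mθ̇(cosθ ẋ + sinθ ẏ)`, the closed-loop
dynamics `mẍ = û sinθ + W¹`, `mÿ = -û cosθ + W²`, `Iθ̈ = û` (where `W¹, W²` are the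
time-derivatives along the trajectory of the drift functions) renders the affine
constraint `φ = sinθ ẋ - cosθ ẏ + cosθ C² - sinθ C¹` invariant: `Γ(φ) = 0`. -/
theorem stmt9 (m I : ℝ) (hm : 0 < m) (hI : 0 < I)
    (C1 C2 : ℝ × ℝ → ℝ) (hC1 : Differentiable ℝ C1) (hC2 : Differentiable ℝ C2)
    (x y θ vx vy vθ : ℝ → ℝ)
    (hx : ∀ t, HasDerivAt x (vx t) t)
    (hy : ∀ t, HasDerivAt y (vy t) t)
    (hθ : ∀ t, HasDerivAt θ (vθ t) t)
    (u W1 W2 : ℝ → ℝ)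
    (hu : ∀ t, u t = -m * vθ t * (Real.cos (θ t) * vx t + Real.sin (θ t) * vy t))
    (hW1 : ∀ t, W1 t = m * deriv (fun s =>
      Real.sin (θ s) ^ 2 * C1 (x s, y s)
        - Real.sin (θ s) * Real.cos (θ s) * C2 (x s, y s)) t)
    (hW2 : ∀ t, W2 t = m * deriv (fun s =>
      -(Real.sin (θ s) * Real.cos (θ s)) * C1 (x s, y s)
        + Real.cos (θ s) ^ 2 * C2 (x s, y s)) t)
    (hax : ∀ t, HasDerivAt vx ((u t * Real.sin (θ t) + W1 t) / m) t)
    (hay : ∀ t, HasDerivAt vy ((-(u t * Real.cos (θ t)) + W2 t) / m) t)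
    (haθ : ∀ t, HasDerivAt vθ (u t / I) t) :
    ∀ t, HasDerivAt (fun s =>
      Real.sin (θ s) * vx s - Real.cos (θ s) * vy s
        + Real.cos (θ s) * C2 (x s, y s) - Real.sin (θ s) * C1 (x s, y s)) 0 t :=
  stmt9_general m hm C1 C2 hC1 hC2 x y θ vx vy vθ hx hy hθ u W1 W2 hu hW1 hW2 hax hay
end
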